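/- arXiv:1409.2922 — 4 statements merged into one kernel-verified Lean document; each statement's English description precedes it below -/
import Mathlib

section
/- Let (T, ≤) be a set-theoretic tree with no uncountable chains and let s ∈ T. Then the connected component of s in the comparability graph G(T) restricted to T ∖ s↓ contains only elements r with s ≤ r. -/
/-- The comparability graph of a partial order. -/
def compGraph (T : Type*) [PartialOrder T] : SimpleGraph T where
  Adj x y := x < y ∨ y < x
  symm := by constructor; intro x y h; tauto
  loopless := by constructor; intro x h; rcases h with h | h <;> exact lt_irrefl x h

/-- In a set-theoretic tree with no uncountable chains, the connected component of `s`
in the comparability graph restricted to `T ∖ s↓` contains only elements `r ≥ s`. -/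
theorem component_above {T : Type*} [PartialOrder T]
    (hwo : ∀ t : T, IsWellOrder {s : T // s < t} (· < ·))
    (hch : ∀ A : Set T, IsChain (· ≤ ·) A → A.Countable)
    (s : T) :
    ∀ r : ({r : T | ¬ r < s} : Set T),
      ((compGraph T).induce {r : T | ¬ r < s}).Reachable ⟨s, lt_irrefl s⟩ r →
        s ≤ (r : T) := by
  intro r hr
  obtain ⟨w⟩ := hr
  suffices H : ∀ (x y : ({r : T | ¬ r < s} : Set T))
      (_ : ((compGraph T).induce {r : T | ¬ r < s}).Walk x y), s ≤ (x : T) → s ≤ (y : T) from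
    H _ _ w le_rfl
  intro x y w
  induction w with
  | nil => exact id
  | @cons a b c h _ ih =>
    intro ha
    apply ih
    have hadj : (a : T) < (b : T) ∨ (b : T) < (a : T) := h
    rcases hadj with hlt | hlt
    · exact le_of_lt (lt_of_le_of_lt ha hlt)
    · -- b < a, s ≤ a
      rcases eq_or_lt_of_le ha with heq | hlt'
      · exact absurd (lt_of_lt_of_le hlt heq.ge) b.2
      · have := hwo (a : T)
        rcases (or_iff_not_imp_left.2 fun h1 => or_iff_not_imp_right.2 fun h3 => this.trichotomous ⟨(b : T), hlt⟩ ⟨s, hlt'⟩ h1 h3 :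
            (⟨(b:T), hlt⟩ : {t : T // t < (a:T)}) < ⟨s, hlt'⟩ ∨ _ ∨ _) with h1 | h1 | h1
        · exact absurd h1 b.2
        · exact le_of_eq (congrArg Subtype.val h1.symm)
        · exact le_of_lt h1
end

section
/- Let T be a set-theoretic tree with no uncountable chains and no branching at limit levels (i.e., if s, t have the same set of strict predecessors and that set has no maximum, then s = t). Let C̄ be a transitive ladder system on T with each C_t ⊆ t↓ either finite or of order type ω cofinal in t↓. Then the graph X_C̄ contains no uncountable ω-connected subgraph: every uncountable set A of vertices contains two points s, t and a finite set F ⊆ A such that every path from s to t lying entirely inside A meets F. -/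
/-- The graph associated to a ladder system `C` on a tree. -/
def ladderGraph {T : Type*} [PartialOrder T] (C : T → Set T) : SimpleGraph T where
  Adj x y := x ≠ y ∧ (x ∈ C y ∨ y ∈ C x)
  symm := by constructor; intro x y ⟨h1, h2⟩; exact ⟨h1.symm, h2.symm⟩
  loopless := by constructor; intro x ⟨h1, _⟩; exact h1 rfl

section LadderAux

variable {T : Type*} [PartialOrder T]

/-- `LDesc C t₀ x` : one can descend from `x` to `t₀` along ladder memberships. -/
inductive LDesc (C : T → Set T) (t₀ : T) : T → Prop
  | refl : LDesc C t₀ t₀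
  | step {x c : T} : c ∈ C x → LDesc C t₀ c → LDesc C t₀ x

lemma ldesc_le {C : T → Set T} (hC : ∀ t : T, C t ⊆ Set.Iio t) {t₀ x : T}
    (h : LDesc C t₀ x) : t₀ ≤ x := by
  induction h with
  | refl => exact le_rfl
  | step hc _ ih => exact ih.trans (hC _ hc).le

lemma ldesc_mem {C : T → Set T} (hC : ∀ t : T, C t ⊆ Set.Iio t)
    (htrans : ∀ t : T, ∀ s ∈ C t, C t ∩ Set.Iio s ⊆ C s)
    (tri : ∀ a b c : T, a < c → b < c → a < b ∨ a = b ∨ b < a)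
    {t₀ x : T} (h : LDesc C t₀ x) :
    ∀ y ∈ C x, y < t₀ → y ∈ C t₀ := by
  induction h with
  | refl => exact fun y hy _ => hy
  | @step x c hc hd ih =>
      intro y hy hyt
      have ht₀c : t₀ ≤ c := ldesc_le hC hd
      rcases tri y c x (hC x hy) (hC x hc) with h1 | h1 | h1
      · exact ih y (htrans x c hc ⟨hy, h1⟩) hyt
      · exact (lt_irrefl t₀ (lt_of_le_of_lt ht₀c (show c < t₀ from h1 ▸ hyt))).elim
      · exact (lt_irrefl t₀ (lt_of_le_of_lt ht₀c (h1.trans hyt))).elim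

lemma ldesc_up {C : T → Set T} (hC : ∀ t : T, C t ⊆ Set.Iio t)
    (htrans : ∀ t : T, ∀ s ∈ C t, C t ∩ Set.Iio s ⊆ C s)
    (tri : ∀ a b c : T, a < c → b < c → a < b ∨ a = b ∨ b < a)
    {t₀ x : T} (h : LDesc C t₀ x) :
    ∀ z ∈ C x, t₀ < z → LDesc C t₀ z := by
  induction h with
  | refl => exact fun z hz ht => absurd (show z < t₀ from hC _ hz) (asymm ht)
  | @step x c hc hd ih =>
      intro z hz ht
      rcases tri z c x (hC x hz) (hC x hc) with h1 | h1 | h1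
      · exact ih z (htrans x c hc ⟨hz, h1⟩) ht
      · exact h1 ▸ hd
      · exact LDesc.step (htrans x z hz ⟨hc, h1⟩) hd

end LadderAux

/-- If `T` is a set-theoretic tree with no uncountable chains and no branching at limit
levels and `C` is a transitive ladder system on `T` (each `C_t` finite or a cofinal
`ω`-sequence in `t↓`), then `X_C` contains no uncountable `ω`-connected subgraph:
every uncountable set `A` contains two points separated inside `A` by a finite
subset of `A`. -/
theorem no_uncountable_omega_connected {T : Type*} [PartialOrder T]
    (hwo : ∀ t : T, IsWellOrder {s : T // s < t} (· < ·))
    (hch : ∀ A : Set T, IsChain (· ≤ ·) A → A.Countable)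
    (hbr : ∀ s t : T, Set.Iio s = Set.Iio t →
      (¬ ∃ m ∈ Set.Iio s, ∀ r ∈ Set.Iio s, r ≤ m) → (Set.Iio s).Nonempty → s = t)
    (C : T → Set T)
    (hC : ∀ t : T, C t ⊆ Set.Iio t)
    (hlad : ∀ t : T, (C t).Finite ∨
      ((C t).Infinite ∧ (∀ r < t, ∃ c ∈ C t, r ≤ c) ∧
        ∀ s ∈ C t, (C t ∩ Set.Iio s).Finite))
    (htrans : ∀ t : T, ∀ s ∈ C t, C t ∩ Set.Iio s ⊆ C s) :
    ∀ A : Set T, ¬ A.Countable →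
      ∃ s ∈ A, ∃ t ∈ A, s ≠ t ∧
        ∃ F : Finset T, ↑F ⊆ A ∧ s ∉ F ∧ t ∉ F ∧
          ∀ p : (ladderGraph C).Walk s t, (∀ v ∈ p.support, v ∈ A) →
            ∃ v ∈ p.support, v ∈ F := by
  intro A hA
  -- trichotomy below any point
  have tri : ∀ a b c : T, a < c → b < c → a < b ∨ a = b ∨ b < a := by
    intro a b c hac hbc
    haveI := hwo c
    rcases @trichotomous {s : T // s < c} (· < ·) _ ⟨a, hac⟩ ⟨b, hbc⟩ with h | h | h
    · exact Or.inl (Subtype.mk_lt_mk.1 h)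
    · exact Or.inr (Or.inl (congrArg Subtype.val h))
    · exact Or.inr (Or.inr (Subtype.mk_lt_mk.1 h))
  -- minima of bounded nonempty sets
  have wmin : ∀ (c : T) (S : Set T), (∀ x ∈ S, x < c) → S.Nonempty →
      ∃ m ∈ S, ∀ b ∈ S, ¬ b < m := by
    intro c S hsub hne
    obtain ⟨a, ha⟩ := hne
    obtain ⟨⟨m, hmc⟩, hmS, hmin⟩ :=
      ((hwo c).toIsWellFounded.wf).has_min {x : {s : T // s < c} | x.val ∈ S}
        ⟨⟨a, hsub a ha⟩, ha⟩
    exact ⟨m, hmS, fun b hb hlt => hmin ⟨b, hsub b hb⟩ hb (Subtype.mk_lt_mk.2 hlt)⟩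
  -- find an incomparable pair in A
  obtain ⟨s, hs, t, ht, hne, hcomp⟩ :
      ∃ s ∈ A, ∃ t ∈ A, s ≠ t ∧ ¬(s ≤ t ∨ t ≤ s) := by
    by_contra h
    push_neg at h
    exact hA (hch A (fun x hx y hy hxy => h x hx y hy hxy))
  -- the root of t's branch over the split D
  have hτ : ∃ τ, τ ≤ t ∧ Set.Iio τ = Set.Iio s ∩ Set.Iio t := by
    by_cases hne' : (Set.Iio t \ (Set.Iio s ∩ Set.Iio t)).Nonempty
    · obtain ⟨τ, hτmem, hτmin⟩ := wmin t _ (fun x hx => hx.1) hne'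
      refine ⟨τ, hτmem.1.le, ?_⟩
      ext x
      constructor
      · intro hx
        by_contra hxD
        exact hτmin x ⟨hx.trans hτmem.1, hxD⟩ hx
      · intro hxD
        rcases tri x τ t hxD.2 hτmem.1 with h | h | h
        · exact h
        · exact absurd (h ▸ hxD) hτmem.2
        · exact absurd ⟨h.trans hxD.1, h.trans hxD.2⟩ hτmem.2
    · refine ⟨t, le_rfl, ?_⟩
      ext x
      constructor
      · intro hx
        by_contra hxD
        exact hne' ⟨x, hx, hxD⟩
      · exact fun hxD => hxD.2
  obtain ⟨τ₀, hτt, hIio⟩ := hτ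
  -- the root of s's branch over the split D
  have hσ : ∃ σ, σ ≤ s ∧ Set.Iio σ = Set.Iio s ∩ Set.Iio t := by
    by_cases hne' : (Set.Iio s \ (Set.Iio s ∩ Set.Iio t)).Nonempty
    · obtain ⟨σ, hσmem, hσmin⟩ := wmin s _ (fun x hx => hx.1) hne'
      refine ⟨σ, hσmem.1.le, ?_⟩
      ext x
      constructor
      · intro hx
        by_contra hxD
        exact hσmin x ⟨hx.trans hσmem.1, hxD⟩ hx
      · intro hxD
        rcases tri x σ s hxD.1 hσmem.1 with h | h | h
        · exact h
        · exact absurd (h ▸ hxD) hσmem.2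
        · exact absurd ⟨h.trans hxD.1, h.trans hxD.2⟩ hσmem.2
    · refine ⟨s, le_rfl, ?_⟩
      ext x
      constructor
      · intro hx
        by_contra hxD
        exact hne' ⟨x, hx, hxD⟩
      · exact fun hxD => hxD.1
  obtain ⟨σ₀, hσs, hIioσ⟩ := hσ
  have hτD : τ₀ ∉ Set.Iio s ∩ Set.Iio t := by
    intro h
    rw [← hIio] at h
    exact lt_irrefl τ₀ h
  have hσD : σ₀ ∉ Set.Iio s ∩ Set.Iio t := by
    intro h
    rw [← hIioσ] at h
    exact lt_irrefl σ₀ h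
  have hneq : σ₀ ≠ τ₀ := by
    intro heq
    have hσt : σ₀ ≤ t := by rw [heq]; exact hτt
    rcases hσs.lt_or_eq with h1 | h1
    · rcases hσt.lt_or_eq with h2 | h2
      · exact hσD ⟨h1, h2⟩
      · exact hcomp (Or.inr (by rw [← h2]; exact h1.le))
    · exact hcomp (Or.inl (by rw [← h1]; exact hσt))
  -- D is empty or has a maximum
  have hDmax : (Set.Iio s ∩ Set.Iio t).Nonempty →
      ∃ m ∈ Set.Iio s ∩ Set.Iio t, ∀ r ∈ Set.Iio s ∩ Set.Iio t, r ≤ m := by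
    intro hDne
    by_contra hno
    exact hneq (hbr σ₀ τ₀ (by rw [hIioσ, hIio])
      (by rw [hIioσ]; exact hno) (by rw [hIioσ]; exact hDne))
  -- s is not above the root τ₀
  have hsτ : ¬ τ₀ ≤ s := by
    intro h
    rcases h.lt_or_eq with hlt | heq
    · rcases hτt.lt_or_eq with hlt2 | heq2
      · exact hτD ⟨hlt, hlt2⟩
      · exact hcomp (Or.inr (by rw [← heq2]; exact hlt.le))
    · exact hcomp (Or.inl (by rw [← heq]; exact hτt))
  -- choose t' minimal in A ∩ Ici τ₀
  have ht' : ∃ t', t' ∈ A ∧ τ₀ ≤ t' ∧ ∀ b ∈ A, τ₀ ≤ b → ¬ b < t' := by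
    by_cases hW : {x | x ∈ A ∧ τ₀ ≤ x ∧ x < t}.Nonempty
    · obtain ⟨m₀, hm₀, hmin⟩ := wmin t _ (fun x hx => hx.2.2) hW
      refine ⟨m₀, hm₀.1, hm₀.2.1, fun b hbA hτb hlt => ?_⟩
      exact hmin b ⟨hbA, hτb, hlt.trans hm₀.2.2⟩ hlt
    · exact ⟨t, ht, hτt, fun b hbA hτb hlt => hW ⟨b, hbA, hτb, hlt⟩⟩
  obtain ⟨t', ht'A, hτt', ht'min⟩ := ht'
  have hsne : s ≠ t' := fun h => hsτ (by rw [h]; exact hτt')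
  -- the separator is finite
  have hFin : (C t' ∩ Set.Iio τ₀).Finite := by
    rcases Set.eq_empty_or_nonempty (Set.Iio s ∩ Set.Iio t) with hD | hD
    · have : C t' ∩ Set.Iio τ₀ = ∅ := by rw [hIio, hD, Set.inter_empty]
      rw [this]; exact Set.finite_empty
    · obtain ⟨m, hmD, hub⟩ := hDmax hD
      have hmτ : m ∈ Set.Iio τ₀ := by rw [hIio]; exact hmD
      have hmt' : m < t' := lt_of_lt_of_le hmτ hτt'
      rcases hlad t' with hfin | ⟨_, hcof, hloc⟩
      · exact hfin.inter_of_left _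
      · obtain ⟨c, hcC, hmc⟩ := hcof m hmt'
        have hss : C t' ∩ Set.Iio τ₀ ⊆ (C t' ∩ Set.Iio c) ∪ {c} := by
          rintro y ⟨hyC, hyτ⟩
          have hym : y ≤ m := hub y (by rw [← hIio]; exact hyτ)
          rcases (hym.trans hmc).lt_or_eq with h | h
          · exact Or.inl ⟨hyC, h⟩
          · exact Or.inr (by simp [h])
        exact (((hloc c hcC).union (Set.finite_singleton c))).subset hss
  have FfinA : (A ∩ (C t' ∩ Set.Iio τ₀)).Finite := hFin.inter_of_right A
  -- main walk lemma
  have main : ∀ (x w : T) (p : (ladderGraph C).Walk x w), w = t' →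
      (∀ v ∈ p.support, v ∈ A) →
      (∃ v ∈ p.support, v ∈ FfinA.toFinset) ∨ (τ₀ ≤ x ∧ LDesc C t' x) := by
    intro x w p
    induction p with
    | nil =>
      intro hw _
      subst hw
      exact Or.inr ⟨hτt', LDesc.refl⟩
    | @cons a b _ hadj q ih =>
      intro hw hsup
      obtain ⟨hne', hor⟩ := id hadj
      have hsupq : ∀ v ∈ q.support, v ∈ A := by
        intro v hv
        exact hsup v (by rw [SimpleGraph.Walk.support_cons]; exact List.mem_cons_of_mem _ hv)
      have haA : a ∈ A :=
        hsup a (by rw [SimpleGraph.Walk.support_cons]; exact List.mem_cons_self)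
      rcases ih hw hsupq with ⟨v, hv, hvF⟩ | ⟨hτb, hdb⟩
      · exact Or.inl ⟨v, by
          rw [SimpleGraph.Walk.support_cons]; exact List.mem_cons_of_mem _ hv, hvF⟩
      · by_cases hτa : τ₀ ≤ a
        · refine Or.inr ⟨hτa, ?_⟩
          by_cases haeq : a = t'
          · rw [haeq]; exact LDesc.refl
          · have hnlt : ¬ a < t' := fun hlt => ht'min a haA hτa hlt
            rcases hor with hab | hba
            · have hab' : a < b := hC b hab
              have ht'b : t' ≤ b := ldesc_le hC hdb
              rcases ht'b.lt_or_eq with ht'ltb | ht'eqb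
              · rcases tri a t' b hab' ht'ltb with h1 | h1 | h1
                · exact absurd h1 hnlt
                · exact absurd h1 haeq
                · exact ldesc_up hC htrans tri hdb a hab h1
              · have : a ∈ C t' := by rw [ht'eqb]; exact hab
                exact absurd (hC t' this) hnlt
            · exact LDesc.step hba hdb
        · have hab : a ∈ C b := by
            rcases hor with h | h
            · exact h
            · exact absurd (hτb.trans (hC a h).le) hτa
          have haτ : a < τ₀ := by
            rcases hτb.lt_or_eq with h1 | h1
            · rcases tri a τ₀ b (hC b hab) h1 with h2 | h2 | h2
              · exact h2
              · exact absurd h2.ge hτa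
              · exact absurd h2.le hτa
            · rw [h1]; exact hC b hab
          have haF : a ∈ A ∩ (C t' ∩ Set.Iio τ₀) :=
            ⟨haA, ldesc_mem hC htrans tri hdb a hab (lt_of_lt_of_le haτ hτt'), haτ⟩
          refine Or.inl ⟨a, ?_, (FfinA.mem_toFinset).2 haF⟩
          rw [SimpleGraph.Walk.support_cons]; exact List.mem_cons_self
  -- conclusion
  refine ⟨s, hs, t', ht'A, hsne, FfinA.toFinset, ?_, ?_, ?_, ?_⟩
  · rw [Set.Finite.coe_toFinset]; exact Set.inter_subset_left
  · intro hmem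
    have h' := (FfinA.mem_toFinset).1 hmem
    have hsD : s ∈ Set.Iio s ∩ Set.Iio t := by rw [← hIio]; exact h'.2.2
    exact lt_irrefl s hsD.1
  · intro hmem
    have h' := (FfinA.mem_toFinset).1 hmem
    exact lt_irrefl t' (lt_of_lt_of_le h'.2.2 hτt')
  · intro p hp
    rcases main s t' p rfl hp with ⟨v, hv, hvF⟩ | ⟨hτs', _⟩
    · exact ⟨v, hv, hvF⟩
    · exact absurd hτs' hsτ
end

section
/- Let T be a set-theoretic tree and C̄ a transitive ladder system on T. If the chromatic number of the graph X_C̄ is uncountable, then for every colouring f : T → ω there exist n ∈ ω and a set A ⊆ f⁻¹(n) of tree order type ω+1 spanning a complete subgraph of X_C̄ (i.e., X_C̄ → (K_{ω+1})¹_ω). -/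
/-- If `C` is a transitive ladder system on a set-theoretic tree `T` and the graph
`X_C` has uncountable chromatic number, then `X_C → (K_{ω+1})¹_ω`: for every colouring
`f : T → ω` there are `n ∈ ω` and a monochromatic chain of order type `ω + 1` spanning
a complete subgraph of `X_C`. -/
theorem transitive_partition_relation {T : Type*} [PartialOrder T]
    (hwo : ∀ t : T, IsWellOrder {s : T // s < t} (· < ·))
    (C : T → Set T)
    (hC : ∀ t : T, C t ⊆ Set.Iio t)
    (hlad : ∀ t : T, (C t).Finite ∨
      ((C t).Infinite ∧ ∀ s ∈ C t, (C t ∩ Set.Iio s).Finite))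
    (htrans : ∀ t : T, ∀ s ∈ C t, C t ∩ Set.Iio s ⊆ C s)
    (hchr : ¬ ∃ g : T → ℕ, ∀ x y : T, (ladderGraph C).Adj x y → g x ≠ g y) :
    ∀ f : T → ℕ, ∃ (n : ℕ) (a : ℕ → T) (top : T),
      StrictMono a ∧ (∀ i, a i < top) ∧
      (∀ i, f (a i) = n) ∧ f top = n ∧
      (∀ i j, i < j → (ladderGraph C).Adj (a i) (a j)) ∧
      (∀ i, (ladderGraph C).Adj (a i) top) := by
  -- `<` is well-founded on `T`, since every initial segment is well-ordered.
  have hwf : WellFounded ((· < ·) : T → T → Prop) := by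
    constructor
    intro t
    have H : ∀ x : {s : T // s < t}, Acc ((· < ·) : T → T → Prop) x.val := by
      intro x
      refine ((hwo t).toIsWellFounded.wf).induction
        (C := fun x : {s : T // s < t} => Acc ((· < ·) : T → T → Prop) x.val) x ?_
      intro y ih
      refine Acc.intro y.val (fun z hz => ?_)
      exact ih ⟨z, lt_trans hz y.2⟩ hz
    exact Acc.intro t (fun s hs => H ⟨s, hs⟩)
  intro f
  by_contra hcon
  apply hchr
  -- Each `C t` meets the colour class of `t` in a finite set.
  have hfin : ∀ t : T, Set.Finite {s : T | s ∈ C t ∧ f s = f t} := by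
    intro t
    by_contra hnfin
    have hinf : {s : T | s ∈ C t ∧ f s = f t}.Infinite := hnfin
    apply hcon
    set W := {s : T // s < t} with hW
    set D' : Set W := {x : W | x.val ∈ C t ∧ f x.val = f t} with hD'
    have hDeq : {s : T | s ∈ C t ∧ f s = f t} = Subtype.val '' D' := by
      ext x
      constructor
      · intro hx; exact ⟨⟨x, hC t hx.1⟩, hx, rfl⟩
      · rintro ⟨w, hw, rfl⟩; exact hw
    have hD'inf : D'.Infinite := by
      apply Set.Infinite.of_image (f := Subtype.val)
      rw [← hDeq]; exact hinf
    have wfW := (hwo t).toIsWellFounded.wf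
    let S : ℕ → {A : Set W // A.Infinite} := fun n => Nat.rec ⟨D', hD'inf⟩
      (fun _ p => ⟨p.val \ {wfW.min p.val p.2.nonempty},
        p.2.diff (Set.finite_singleton _)⟩) n
    let b : ℕ → W := fun n => wfW.min (S n).val (S n).2.nonempty
    have hbmem : ∀ n, b n ∈ (S n).val := fun n => wfW.min_mem _ _
    have hSsub : ∀ n, (S n).val ⊆ D' := by
      intro n; induction n with
      | zero => exact fun x hx => hx
      | succ m ih => exact fun x hx => ih hx.1
    have hblt : ∀ n, b n < b (n + 1) := by
      intro n
      have h1 : b (n + 1) ∈ (S n).val := (hbmem (n + 1)).1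
      have h2 : b (n + 1) ≠ b n := (hbmem (n + 1)).2
      have h3 : ¬ b (n + 1) < b n := fun h => wfW.not_lt_min _ h1 h
      rcases (show b n < b (n + 1) ∨ b n = b (n + 1) ∨ b (n + 1) < b n from open Classical in if p : b n < b (n + 1) then Or.inl p else if q : b (n + 1) < b n then Or.inr (Or.inr q) else Or.inr (Or.inl ((hwo t).trichotomous (b n) (b (n + 1)) p q))) with h | h | h
      · exact h
      · exact absurd h.symm h2
      · exact absurd h h3
    have hbmono : StrictMono b := strictMono_nat_of_lt_succ hblt
    refine ⟨f t, fun i => (b i).val, t, ?_, ?_, ?_, rfl, ?_, ?_⟩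
    · intro i j hij
      exact hbmono hij
    · intro i; exact (b i).2
    · intro i; exact (hSsub i (hbmem i)).2
    · intro i j hij
      have hi : (b i).val ∈ C t := (hSsub i (hbmem i)).1
      have hj : (b j).val ∈ C t := (hSsub j (hbmem j)).1
      have hlt : (b i).val < (b j).val := hbmono hij
      exact ⟨ne_of_lt hlt, Or.inl (htrans t _ hj ⟨hi, hlt⟩)⟩
    · intro i
      have hi : (b i).val ∈ C t := (hSsub i (hbmem i)).1
      exact ⟨ne_of_lt (hC t hi), Or.inl hi⟩
  -- Recursively defined good colouring.
  let F : ∀ t : T, (∀ s : T, s < t → ℕ) → ℕ := fun t ih =>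
    ((hfin t).toFinset.attach.sup fun s =>
      ih s.val (hC t (((hfin t).mem_toFinset.mp s.2).1))) + 1
  let k : T → ℕ := hwf.fix F
  have hkey : ∀ t s, s ∈ C t → f s = f t → k s < k t := by
    intro t s hs hfs
    have heq : k t = F t (fun s _ => k s) := hwf.fix_eq F t
    have hmem : s ∈ (hfin t).toFinset := (hfin t).mem_toFinset.mpr ⟨hs, hfs⟩
    have hle : k s ≤ (hfin t).toFinset.attach.sup fun x =>
        k x.val :=
      Finset.le_sup (f := fun x : {x // x ∈ (hfin t).toFinset} => k x.val)
        (Finset.mem_attach _ ⟨s, hmem⟩)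
    refine lt_of_le_of_lt hle ?_
    rw [heq]
    exact Nat.lt_succ_of_le le_rfl
  refine ⟨fun t => Nat.pair (f t) (k t), ?_⟩
  rintro x y ⟨hne, hor⟩ heq
  obtain ⟨h1, h2⟩ := Nat.pair_eq_pair.mp heq
  rcases hor with hx | hy
  · exact absurd h2 (ne_of_lt (hkey y x hx h1))
  · exact absurd h2.symm (ne_of_lt (hkey x y hy h1.symm))
end

section
/- Let T be a set-theoretic tree and C̄ a transitive ladder system on T. Suppose that for every t ∈ T with f(t) = n the set C_t ∩ f⁻¹(n) is finite, for a given colouring f : T → ω. Then there is a colouring g : T → ω × ω witnessing that the chromatic number of X_C̄ is at most ℵ₀, i.e., g is a proper colouring of X_C̄ with countably many colours. -/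
/-- If `C` is a transitive ladder system on a set-theoretic tree `T`, `f : T → ω` is a
colouring, and for every `t` the set `C_t ∩ f⁻¹(f t)` is finite, then there is a proper
colouring `g : T → ω × ω` of the graph `X_C`, so its chromatic number is at most `ℵ₀`. -/
theorem countable_chromatic_of_finite_monochromatic_ladders {T : Type*} [PartialOrder T]
    (hwo : ∀ t : T, IsWellOrder {s : T // s < t} (· < ·))
    (C : T → Set T)
    (hC : ∀ t : T, C t ⊆ Set.Iio t)
    (htrans : ∀ t : T, ∀ s ∈ C t, C t ∩ Set.Iio s ⊆ C s)
    (f : T → ℕ)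
    (hfin : ∀ t : T, (C t ∩ {s : T | f s = f t}).Finite) :
    ∃ g : T → ℕ × ℕ, ∀ x y : T, (ladderGraph C).Adj x y → g x ≠ g y := by
  classical
  -- `<` is well-founded on `T`
  have wf : WellFounded ((· < ·) : T → T → Prop) := by
    constructor
    intro t
    have H : ∀ s : {s : T // s < t}, Acc ((· < ·) : T → T → Prop) s.1 := by
      intro s
      refine WellFounded.induction (C := fun x : {s : T // s < t} => Acc ((· < ·) : T → T → Prop) x.1) (hwo t).toIsWellFounded.wf s ?_
      intro x ih
      refine Acc.intro x.1 (fun u hu => ?_)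
      exact ih ⟨u, hu.trans x.2⟩ (by exact hu)
    exact Acc.intro t (fun s hs => H ⟨s, hs⟩)
  -- define g₁ by recursion
  let F : ∀ t : T, (∀ s : T, s < t → ℕ) → ℕ := fun t rec =>
    (hfin t).toFinset.attach.sup
      (fun s => rec s.1 (hC t ((Set.Finite.mem_toFinset _).mp s.2).1) + 1)
  let g1 : T → ℕ := wf.fix F
  have hg1 : ∀ t : T, g1 t = F t (fun s _ => g1 s) := fun t => wf.fix_eq F t
  have key : ∀ t : T, ∀ s : T, s ∈ C t → f s = f t → g1 s < g1 t := by
    intro t s hs hf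
    have hmem : s ∈ (hfin t).toFinset := (Set.Finite.mem_toFinset _).mpr ⟨hs, hf⟩
    have hle : g1 s + 1 ≤ F t (fun s _ => g1 s) := by
      exact Finset.le_sup (f := fun (s : {x // x ∈ (hfin t).toFinset}) => g1 s.1 + 1)
        (Finset.mem_attach _ ⟨s, hmem⟩)
    rw [hg1 t]
    omega
  refine ⟨fun t => (f t, g1 t), ?_⟩
  rintro x y ⟨hne, hxy⟩ heq
  have hf : f x = f y := congrArg Prod.fst heq
  have hg : g1 x = g1 y := congrArg Prod.snd heq
  rcases hxy with h | h
  · exact absurd hg (Nat.ne_of_lt (key y x h hf))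
  · exact absurd hg (Nat.ne_of_gt (key x y h hf.symm))
end
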